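/- arXiv:1901.10325 — 3 statements merged into one kernel-verified Lean document; each statement's English description precedes it below -/
import Mathlib

section
/- Fix α > 1 and h > 0, and define φ(t) = t^α for t ≤ h and φ(t) = h^α + α·h^(α−1)·(t − h) for t > h. Then for all s, t ≥ 0, φ(s + t) − φ(s) − φ(t) ≤ 2^α · h^α. -/
theorem phi_add_sub_le (α h : ℝ) (hα : 1 < α) (hh : 0 < h)
    (φ : ℝ → ℝ)
    (hφ : ∀ t, φ t = if t ≤ h then t ^ α else h ^ α + α * h ^ (α - 1) * (t - h)) :
    ∀ s t : ℝ, 0 ≤ s → 0 ≤ t → φ (s + t) - φ s - φ t ≤ 2 ^ α * h ^ α := by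
  intro s t hs ht
  have hhα : (0:ℝ) < h ^ α := Real.rpow_pos_of_pos hh α
  have hc : (0:ℝ) < α * h ^ (α - 1) :=
    mul_pos (by linarith) (Real.rpow_pos_of_pos hh _)
  have hmul : h ^ (α - 1) * h = h ^ α := by
    have := (Real.rpow_add hh (α-1) 1).symm
    simpa using this
  have hbern : (1:ℝ) + α ≤ 2 ^ α := by
    have := one_add_mul_self_le_rpow_one_add (by norm_num : (-1:ℝ) ≤ 1) hα.le
    norm_num at this
    linarith
  have hub : ∀ u : ℝ, 0 ≤ u → φ u ≤ h ^ α + α * h ^ (α - 1) * max (u - h) 0 := by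
    intro u hu
    rw [hφ]
    rcases le_or_gt u h with hle | hlt
    · simp only [hle, if_pos]
      have h1 : u ^ α ≤ h ^ α := Real.rpow_le_rpow hu hle (by linarith)
      have h2 : 0 ≤ max (u - h) 0 := le_max_right _ _
      nlinarith
    · rw [if_neg (not_le.mpr hlt), max_eq_left (by linarith)]
  have hlb : ∀ u : ℝ, 0 ≤ u → α * h ^ (α - 1) * max (u - h) 0 ≤ φ u := by
    intro u hu
    rw [hφ]
    rcases le_or_gt u h with hle | hlt
    · simp only [hle, if_pos, max_eq_right (by linarith : u - h ≤ 0), mul_zero]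
      exact Real.rpow_nonneg hu α
    · rw [if_neg (not_le.mpr hlt), max_eq_left (by linarith)]
      linarith
  have hmax : max (s + t - h) 0 - max (s - h) 0 - max (t - h) 0 ≤ h := by
    rcases le_total s h with h1 | h1 <;> rcases le_total t h with h2 | h2 <;>
      rcases le_total (s + t) h with h3 | h3 <;>
      simp [max_def] <;> split_ifs <;> linarith
  have h1 := hub (s + t) (by linarith)
  have h2 := hlb s hs
  have h3 := hlb t ht
  have key : φ (s + t) - φ s - φ t ≤ h ^ α + α * h ^ (α - 1) * h := by
    have := mul_le_mul_of_nonneg_left hmax hc.le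
    nlinarith [mul_le_mul_of_nonneg_left hmax hc.le]
  rw [mul_assoc, hmul] at key
  nlinarith
end

section
/- Fix α > 1 and h₀ > 0, and let h ≥ h₀. Define φ(t) = t^α for t ≤ h and φ(t) = h^α + α·h^(α−1)·(t − h) for t > h. Then there exists a constant c > 0, depending only on α and h₀ (not on h), such that for all real ℓ ≥ 1/2, 2·φ(√(ℓ² + (c·√ℓ)²)) ≤ φ(2ℓ). -/
/-!
Write `φ_h = truncPow α h` for the power `t ↦ t ^ α` continued linearly beyond `h` along its tangent.
In the linear regime `h ≤ s ≤ t` the inequality `2 φ_h(s) ≤ φ_h(t)` is equivalent to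
`α (2s - t) ≤ (α - 1) h`. If instead `s < h`, then `φ_h(s) = φ_s(s)` while `φ_s(t) ≤ φ_h(t)`
(tangent lines of a convex function lie below it, with increasing slopes), so one may lower the
truncation level to `s`. For `s = √(ℓ² + c²ℓ) ≤ ℓ + c²/2` and `t = 2ℓ` we have `2s - t ≤ c²`, and
both `h ≥ h₀` and `s ≥ 1/2` are bounded below independently of `h`.
-/

open Real

noncomputable def truncPow (α h t : ℝ) : ℝ :=
  if t ≤ h then t ^ α else h ^ α + α * h ^ (α - 1) * (t - h)

lemma rpow_eq_rpow_sub_one_mul {h : ℝ} (hh : 0 < h) (α : ℝ) : h ^ α = h ^ (α - 1) * h := by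
  rw [← rpow_add_one hh.ne', sub_add_cancel]

lemma rpow_tangent_le {α h t : ℝ} (hα : 1 ≤ α) (hh : 0 < h) (ht : 0 ≤ t) :
    h ^ α + α * h ^ (α - 1) * (t - h) ≤ t ^ α := by
  have hB := one_add_mul_self_le_rpow_one_add (s := t / h - 1)
    (by linarith [div_nonneg ht hh.le]) hα
  rw [add_sub_cancel, div_rpow ht hh.le, le_div_iff₀ (by positivity)] at hB
  calc h ^ α + α * h ^ (α - 1) * (t - h) = (1 + α * (t / h - 1)) * h ^ α := by
        rw [rpow_eq_rpow_sub_one_mul hh]; field_simp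
    _ ≤ t ^ α := hB

lemma truncPow_of_le {α h t : ℝ} (hht : h ≤ t) :
    truncPow α h t = h ^ α + α * h ^ (α - 1) * (t - h) := by
  unfold truncPow
  split_ifs with hth
  · rw [le_antisymm hth hht, sub_self, mul_zero, add_zero]
  · rfl

lemma truncPow_le_truncPow {α h h' t : ℝ} (hα : 1 ≤ α) (hh : 0 < h) (hhh' : h ≤ h')
    (ht : 0 ≤ t) : truncPow α h t ≤ truncPow α h' t := by
  rcases le_or_gt t h with hth | hht
  · rw [truncPow, if_pos hth, truncPow, if_pos (hth.trans hhh')]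
  rw [truncPow_of_le hht.le]
  rcases le_or_gt t h' with hth' | hh't
  · rw [truncPow, if_pos hth']
    exact rpow_tangent_le hα hh ht
  rw [truncPow_of_le hh't.le]
  have hslope : h ^ (α - 1) ≤ h' ^ (α - 1) := rpow_le_rpow hh.le hhh' (by linarith)
  calc h ^ α + α * h ^ (α - 1) * (t - h)
      = (h ^ α + α * h ^ (α - 1) * (h' - h)) + α * h ^ (α - 1) * (t - h') := by ring
    _ ≤ h' ^ α + α * h' ^ (α - 1) * (t - h') := by
        gcongr
        exact rpow_tangent_le hα hh (hh.le.trans hhh')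

lemma two_mul_truncPow_le_of_le {α h s t : ℝ} (hα : 1 ≤ α) (hh : 0 < h) (hhs : h ≤ s)
    (hgap : α * (2 * s - t) ≤ (α - 1) * h) : 2 * truncPow α h s ≤ truncPow α h t := by
  have hst : s ≤ t := by nlinarith
  rw [truncPow_of_le hhs, truncPow_of_le (hhs.trans hst), rpow_eq_rpow_sub_one_mul hh]
  have hp : 0 ≤ h ^ (α - 1) := by positivity
  nlinarith [mul_le_mul_of_nonneg_left hgap hp]

lemma two_mul_truncPow_le {α h s t : ℝ} (hα : 1 ≤ α) (hh : 0 < h) (hs : 0 < s)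
    (hgap : α * (2 * s - t) ≤ (α - 1) * min h s) : 2 * truncPow α h s ≤ truncPow α h t := by
  rcases le_total h s with hhs | hsh
  · rw [min_eq_left hhs] at hgap
    exact two_mul_truncPow_le_of_le hα hh hhs hgap
  rw [min_eq_right hsh] at hgap
  calc 2 * truncPow α h s = 2 * truncPow α s s := by
        rw [truncPow, if_pos hsh, truncPow, if_pos le_rfl]
    _ ≤ truncPow α s t := two_mul_truncPow_le_of_le hα hs le_rfl hgap
    _ ≤ truncPow α h t := truncPow_le_truncPow hα hs hsh (by nlinarith)

lemma sqrt_sq_add_mul_le {ℓ κ : ℝ} (hℓ : 0 ≤ ℓ) (hκ : 0 ≤ κ) :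
    √(ℓ ^ 2 + κ * ℓ) ≤ ℓ + κ / 2 :=
  sqrt_le_iff.2 ⟨by positivity, by nlinarith⟩

theorem phi_W_dimensions (α h₀ : ℝ) (hα : 1 < α) (hh₀ : 0 < h₀) :
    ∃ c : ℝ, 0 < c ∧ ∀ h : ℝ, h₀ ≤ h →
      ∀ φ : ℝ → ℝ,
        (∀ t, φ t = if t ≤ h then t ^ α else h ^ α + α * h ^ (α - 1) * (t - h)) →
        ∀ ℓ : ℝ, (1 : ℝ) / 2 ≤ ℓ →
          2 * φ (Real.sqrt (ℓ ^ 2 + (c * Real.sqrt ℓ) ^ 2)) ≤ φ (2 * ℓ) := by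
  set κ := (α - 1) * min h₀ (1 / 2) / α with hκ_def
  have hκ : 0 < κ := div_pos (mul_pos (by linarith) (lt_min hh₀ one_half_pos)) (by linarith)
  refine ⟨√κ, sqrt_pos.2 hκ, fun h hh φ hφ ℓ hℓ => ?_⟩
  obtain rfl : φ = truncPow α h := funext hφ
  rw [mul_pow, sq_sqrt hκ.le, sq_sqrt (by linarith)]
  have hℓs : ℓ ≤ √(ℓ ^ 2 + κ * ℓ) := le_sqrt_of_sq_le (by nlinarith)
  have hsκ := sqrt_sq_add_mul_le (ℓ := ℓ) (by linarith) hκ.le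
  refine two_mul_truncPow_le hα.le (by linarith) (by linarith) ?_
  calc α * (2 * √(ℓ ^ 2 + κ * ℓ) - 2 * ℓ) ≤ α * κ := by gcongr; linarith
    _ = (α - 1) * min h₀ (1 / 2) := by rw [hκ_def]; field_simp
    _ ≤ (α - 1) * min h √(ℓ ^ 2 + κ * ℓ) := by gcongr; linarith
end

section
/- Let X be a real random variable in L¹ on a probability space, and let G ⊆ F be sub-σ-algebras. Then E|E[X | F] − E[X | G]| ≤ E|X̃ − X|, where X̃ is an independent resampling of X in the following sense: if X = f(X₁, X₂, X₃) for independent random elements X₁, X₂, X₃ with G = σ(X₁), F = σ(X₁, X₂), then X̃ = f(X₁, X₂′, X₃) where X₂′ is an independent copy of X₂, independent of (X₁, X₂, X₃). -/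
/-!
Conditionally on `X₁`, integrating out the independent pair `(X₂, X₃)` gives
`E[X | X₁] = g(X₁)` with `g x = ∫ f(x, ·, ·) d Law(X₂, X₃)`. Conditionally on `(X₁, X₂)`, the
resampled variable `X' = f(X₁, X₂', X₃)` has the same conditional expectation, because `(X₂', X₃)`
is independent of `(X₁, X₂)` and has the law of `(X₂, X₃)`. Hence
`E[X | X₁, X₂] - E[X | X₁] = E[X - X' | X₁, X₂]`, and conditional Jensen for `|·|` concludes.
-/

open MeasureTheory ProbabilityTheory

namespace ProbabilityTheory

variable {Ω : Type*} {mΩ : MeasurableSpace Ω} {μ : Measure Ω}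

theorem iIndep.indep_sup_sup {ι : Type*} {m : ι → MeasurableSpace Ω} (h_le : ∀ i, m i ≤ mΩ)
    (h_indep : iIndep m μ) {i j k l : ι} (hik : i ≠ k) (hil : i ≠ l) (hjk : j ≠ k)
    (hjl : j ≠ l) :
    Indep (m i ⊔ m j) (m k ⊔ m l) μ := by
  have hST : Disjoint ({i, j} : Set ι) {k, l} := by
    simp [Set.disjoint_left, hik, hil, hjk, hjl]
  simpa [iSup_or, iSup_sup_eq] using indep_iSup_of_disjoint h_le h_indep hST

section Freezing

variable {α β F : Type*} [MeasurableSpace α] [MeasurableSpace β]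
  [NormedAddCommGroup F] [NormedSpace ℝ F] [CompleteSpace F] [IsFiniteMeasure μ]
  {Y : Ω → α} {Z : Ω → β}

theorem IndepFun.condExp_comap_ae_eq_integral_map (hY : Measurable Y) (hZ : Measurable Z)
    (hYZ : IndepFun Y Z μ) {φ : α × β → F} (hφ : StronglyMeasurable φ)
    (hint : Integrable (fun ω => φ (Y ω, Z ω)) μ) :
    μ[fun ω => φ (Y ω, Z ω) | MeasurableSpace.comap Y inferInstance]
      =ᵐ[μ] fun ω => ∫ z, φ (Y ω, z) ∂(μ.map Z) := by
  have hmap : μ.map (fun ω => (Y ω, Z ω)) = (μ.map Y).prod (μ.map Z) :=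
    hYZ.map_prod_eq_prod_map_map hY.aemeasurable hZ.aemeasurable
  have hφ_int : Integrable φ ((μ.map Y).prod (μ.map Z)) := by
    rw [← hmap]
    exact (integrable_map_measure hφ.aestronglyMeasurable (hY.prodMk hZ).aemeasurable).mpr hint
  have hG_meas : StronglyMeasurable fun y => ∫ z, φ (y, z) ∂(μ.map Z) :=
    hφ.integral_prod_right'
  have hG_int : Integrable (fun ω => ∫ z, φ (Y ω, z) ∂(μ.map Z)) μ :=
    (integrable_map_measure hG_meas.aestronglyMeasurable hY.aemeasurable).mp
      hφ_int.integral_prod_left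
  refine (ae_eq_condExp_of_forall_setIntegral_eq hY.comap_le hint
    (fun _ _ _ => hG_int.integrableOn) ?_
    (hG_meas.comp_measurable (Measurable.of_comap_le le_rfl)).aestronglyMeasurable).symm
  rintro _ ⟨A, hA, rfl⟩ -
  calc ∫ ω in Y ⁻¹' A, ∫ z, φ (Y ω, z) ∂(μ.map Z) ∂μ
      = ∫ y in A, ∫ z, φ (y, z) ∂(μ.map Z) ∂(μ.map Y) := by
        rw [setIntegral_map hA hG_meas.aestronglyMeasurable hY.aemeasurable]
    _ = ∫ p in A ×ˢ Set.univ, φ p ∂((μ.map Y).prod (μ.map Z)) := by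
        rw [setIntegral_prod _ hφ_int.integrableOn, Measure.restrict_univ]
    _ = ∫ ω in Y ⁻¹' A, φ (Y ω, Z ω) ∂μ := by
        rw [← hmap, setIntegral_map (hA.prod MeasurableSet.univ) hφ.aestronglyMeasurable
          (hY.prodMk hZ).aemeasurable, Set.mk_preimage_prod, Set.preimage_univ, Set.inter_univ]

end Freezing

end ProbabilityTheory

namespace MeasureTheory

variable {Ω : Type*} {m₁ m₂ mΩ : MeasurableSpace Ω} {μ : Measure Ω}

theorem integral_abs_condExp_sub_condExp_le {X X' : Ω → ℝ} (hX : Integrable X μ)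
    (hX' : Integrable X' μ) (h : μ[X' | m₁] =ᵐ[μ] μ[X | m₂]) :
    ∫ ω, |μ[X | m₁] ω - μ[X | m₂] ω| ∂μ ≤ ∫ ω, |X' ω - X ω| ∂μ := by
  have hsub : μ[X | m₁] - μ[X | m₂] =ᵐ[μ] μ[X - X' | m₁] := by
    filter_upwards [h, condExp_sub hX hX' m₁] with ω hω hsub
    rw [hsub, Pi.sub_apply, Pi.sub_apply, hω]
  calc ∫ ω, |μ[X | m₁] ω - μ[X | m₂] ω| ∂μ = ∫ ω, |μ[X - X' | m₁] ω| ∂μ :=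
        integral_congr_ae (hsub.mono fun _ hω => congrArg abs hω)
    _ ≤ ∫ ω, |X ω - X' ω| ∂μ := integral_abs_condExp_le _
    _ = ∫ ω, |X' ω - X ω| ∂μ := by simp_rw [abs_sub_comm]

end MeasureTheory

theorem condExp_diff_le_resample_general
    {Ω E₁ E₂ E₃ : Type*} [MeasurableSpace Ω] [MeasurableSpace E₁]
    [MeasurableSpace E₂] [MeasurableSpace E₃]
    (μ : Measure Ω)
    (X₁ : Ω → E₁) (X₂ X₂' : Ω → E₂) (X₃ : Ω → E₃)
    (hX₁ : Measurable X₁) (hX₂ : Measurable X₂) (hX₂' : Measurable X₂')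
    (hX₃ : Measurable X₃)
    (hindep : iIndep
      ![MeasurableSpace.comap X₁ inferInstance, MeasurableSpace.comap X₂ inferInstance,
        MeasurableSpace.comap X₂' inferInstance, MeasurableSpace.comap X₃ inferInstance] μ)
    (hid : IdentDistrib X₂ X₂' μ μ)
    (f : E₁ → E₂ → E₃ → ℝ)
    (hf : Measurable fun p : E₁ × E₂ × E₃ => f p.1 p.2.1 p.2.2)
    (hint : Integrable (fun ω => f (X₁ ω) (X₂ ω) (X₃ ω)) μ)
    (hint' : Integrable (fun ω => f (X₁ ω) (X₂' ω) (X₃ ω)) μ) :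
    ∫ ω, |(μ[(fun ω' => f (X₁ ω') (X₂ ω') (X₃ ω')) |
            MeasurableSpace.comap (fun ω' => (X₁ ω', X₂ ω')) inferInstance]) ω -
          (μ[(fun ω' => f (X₁ ω') (X₂ ω') (X₃ ω')) |
            MeasurableSpace.comap X₁ inferInstance]) ω| ∂μ ≤
      ∫ ω, |f (X₁ ω) (X₂' ω) (X₃ ω) - f (X₁ ω) (X₂ ω) (X₃ ω)| ∂μ := by
  have := hindep.isProbabilityMeasure
  have h_le : ∀ i, ![MeasurableSpace.comap X₁ inferInstance, MeasurableSpace.comap X₂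
      inferInstance, MeasurableSpace.comap X₂' inferInstance, MeasurableSpace.comap X₃
      inferInstance] i ≤ ‹_› := by
    simp [Fin.forall_fin_succ, hX₁.comap_le, hX₂.comap_le, hX₂'.comap_le, hX₃.comap_le]
  have h₁₂_indep_₂'₃ : IndepFun (fun ω => (X₁ ω, X₂ ω)) (fun ω => (X₂' ω, X₃ ω)) μ := by
    rw [IndepFun_iff_Indep]
    convert hindep.indep_sup_sup h_le (i := 0) (j := 1) (k := 2) (l := 3)
      (by decide) (by decide) (by decide) (by decide) using 1 <;>
    exact MeasurableSpace.comap_prodMk _ _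
  have h₁_indep_₂₃ : IndepFun X₁ (fun ω => (X₂ ω, X₃ ω)) μ := by
    rw [IndepFun_iff_Indep]
    convert hindep.indep_sup_sup h_le (i := 0) (j := 0) (k := 1) (l := 3)
      (by decide) (by decide) (by decide) (by decide) using 1
    exacts [(sup_idem _).symm, MeasurableSpace.comap_prodMk _ _]
  have h_law : μ.map (fun ω => (X₂ ω, X₃ ω)) = μ.map (fun ω => (X₂' ω, X₃ ω)) :=
    (hid.prodMk (IdentDistrib.refl hX₃.aemeasurable) (hindep.indep (i := 1) (j := 3) (by decide))
      (hindep.indep (i := 2) (j := 3) (by decide))).map_eq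
  have hφ : Measurable fun p : (E₁ × E₂) × E₂ × E₃ => f p.1.1 p.2.1 p.2.2 :=
    hf.comp (measurable_fst.fst.prodMk (measurable_snd.fst.prodMk measurable_snd.snd))
  refine integral_abs_condExp_sub_condExp_le hint hint' ?_
  have hF := h₁₂_indep_₂'₃.condExp_comap_ae_eq_integral_map (hX₁.prodMk hX₂) (hX₂'.prodMk hX₃)
    hφ.stronglyMeasurable hint'
  have hG := h₁_indep_₂₃.condExp_comap_ae_eq_integral_map hX₁ (hX₂.prodMk hX₃)
    hf.stronglyMeasurable hint
  rw [← h_law] at hF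
  exact hF.trans hG.symm

theorem condExp_diff_le_resample
    {Ω E₁ E₂ E₃ : Type*} [MeasurableSpace Ω] [MeasurableSpace E₁]
    [MeasurableSpace E₂] [MeasurableSpace E₃]
    (μ : Measure Ω) [IsProbabilityMeasure μ]
    (X₁ : Ω → E₁) (X₂ X₂' : Ω → E₂) (X₃ : Ω → E₃)
    (hX₁ : Measurable X₁) (hX₂ : Measurable X₂) (hX₂' : Measurable X₂')
    (hX₃ : Measurable X₃)
    (hindep : iIndep
      ![MeasurableSpace.comap X₁ inferInstance, MeasurableSpace.comap X₂ inferInstance,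
        MeasurableSpace.comap X₂' inferInstance, MeasurableSpace.comap X₃ inferInstance] μ)
    (hid : IdentDistrib X₂ X₂' μ μ)
    (f : E₁ → E₂ → E₃ → ℝ)
    (hf : Measurable fun p : E₁ × E₂ × E₃ => f p.1 p.2.1 p.2.2)
    (hint : Integrable (fun ω => f (X₁ ω) (X₂ ω) (X₃ ω)) μ)
    (hint' : Integrable (fun ω => f (X₁ ω) (X₂' ω) (X₃ ω)) μ) :
    ∫ ω, |(μ[(fun ω' => f (X₁ ω') (X₂ ω') (X₃ ω')) |
            MeasurableSpace.comap (fun ω' => (X₁ ω', X₂ ω')) inferInstance]) ω -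
          (μ[(fun ω' => f (X₁ ω') (X₂ ω') (X₃ ω')) |
            MeasurableSpace.comap X₁ inferInstance]) ω| ∂μ ≤
      ∫ ω, |f (X₁ ω) (X₂' ω) (X₃ ω) - f (X₁ ω) (X₂ ω) (X₃ ω)| ∂μ :=
  condExp_diff_le_resample_general μ X₁ X₂ X₂' X₃ hX₁ hX₂ hX₂' hX₃ hindep hid f hf hint hint'
end
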